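/- arXiv:0903.1291 — 6 statements merged into one kernel-verified Lean document; each statement's English description precedes it below -/
import Mathlib

section
/- For square matrices A (m×m) and B (p×p) over ℝ, the spectral norm satisfies ‖A ⊗ I_p + I_m ⊗ B‖ ≤ ‖A‖ + ‖B‖, and if A and B are symmetric entrywise-nonnegative matrices then ‖A ⊗ I_p + I_m ⊗ B‖ = ‖A‖ + ‖B‖. -/
/-!
For the upper bound, `A ⊗ I` acts as `A` on each slice of a vector indexed by `m × p`, so
`‖A ⊗ I‖ ≤ ‖A‖`; `I ⊗ B` is `B ⊗ I` up to a permutation of the coordinates, and the triangle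
inequality finishes. For the lower bound, the norm of a symmetric matrix is `|⟪x, A x⟫|` for some
unit vector `x` (Rayleigh quotients plus compactness of the sphere). When `A` is entrywise
nonnegative, `y = |x|` does at least as well, so `‖A‖ = ⟪y, A y⟫`. Taking such `y` for `A` and `w`
for `B`, the unit vector `y ⊗ w` gives `⟪y ⊗ w, (A ⊗ I + I ⊗ B)(y ⊗ w)⟫ = ‖A‖ + ‖B‖`.
-/

open Matrix Kronecker

/-- The spectral (operator) norm of a real square matrix, i.e. the operator norm of the
induced linear map on Euclidean space. -/
noncomputable def specNorm {n : Type*} [Fintype n] [DecidableEq n] (M : Matrix n n ℝ) : ℝ :=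
  ‖Matrix.toEuclideanCLM (𝕜 := ℝ) M‖

open scoped RealInnerProductSpace

namespace Matrix

variable {R l m n p : Type*}

def kroneckerVec [Mul R] (y : m → R) (w : p → R) : m × p → R := fun ik => y ik.1 * w ik.2

section CommSemiring

variable [CommSemiring R]

theorem kronecker_one_eq_reindex_one_kronecker [DecidableEq p] (A : Matrix m m R) :
    A ⊗ₖ (1 : Matrix p p R)
      = reindex (Equiv.prodComm p m) (Equiv.prodComm p m) ((1 : Matrix p p R) ⊗ₖ A) := by
  ext ⟨i, k⟩ ⟨j, k'⟩
  simp [mul_comm]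

variable [Fintype m] [Fintype p]

theorem one_kronecker_mulVec_apply [DecidableEq m] (B : Matrix n p R) (x : m × p → R)
    (i : m) (k : n) :
    ((1 : Matrix m m R) ⊗ₖ B *ᵥ x) (i, k) = (B *ᵥ fun j => x (i, j)) k := by
  simp [mulVec, dotProduct, Fintype.sum_prod_type, one_apply, ite_mul]

theorem kronecker_mulVec_kroneckerVec (A : Matrix l m R) (B : Matrix n p R)
    (y : m → R) (w : p → R) :
    A ⊗ₖ B *ᵥ kroneckerVec y w = kroneckerVec (A *ᵥ y) (B *ᵥ w) := by
  ext ⟨i, k⟩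
  simp only [mulVec, dotProduct, kroneckerVec, kroneckerMap_apply, Fintype.sum_prod_type,
    Finset.sum_mul_sum]
  exact Finset.sum_congr rfl fun _ _ => Finset.sum_congr rfl fun _ _ => by ring

theorem kroneckerVec_dotProduct_kroneckerVec (y y' : m → R) (w w' : p → R) :
    kroneckerVec y w ⬝ᵥ kroneckerVec y' w' = (y ⬝ᵥ y') * (w ⬝ᵥ w') := by
  simp only [dotProduct, kroneckerVec, Fintype.sum_prod_type, Finset.sum_mul_sum]
  exact Finset.sum_congr rfl fun _ _ => Finset.sum_congr rfl fun _ _ => by ring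

theorem kroneckerVec_dotProduct_kroneckerSum_mulVec [DecidableEq m] [DecidableEq p]
    (A : Matrix m m R) (B : Matrix p p R) (y : m → R) (w : p → R) :
    kroneckerVec y w ⬝ᵥ (A ⊗ₖ (1 : Matrix p p R) + (1 : Matrix m m R) ⊗ₖ B) *ᵥ kroneckerVec y w
      = (y ⬝ᵥ A *ᵥ y) * (w ⬝ᵥ w) + (y ⬝ᵥ y) * (w ⬝ᵥ B *ᵥ w) := by
  simp only [add_mulVec, dotProduct_add, kronecker_mulVec_kroneckerVec, one_mulVec,
    kroneckerVec_dotProduct_kroneckerVec]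

end CommSemiring

theorem abs_dotProduct_mulVec_le [Fintype m] [Fintype p] [CommRing R] [LinearOrder R]
    [IsStrictOrderedRing R] {A : Matrix m p R} (hA : ∀ i j, 0 ≤ A i j) (x : m → R) (y : p → R) :
    |x ⬝ᵥ A *ᵥ y| ≤ |x| ⬝ᵥ A *ᵥ |y| := by
  simp only [dotProduct, mulVec, Finset.mul_sum]
  refine (Finset.abs_sum_le_sum_abs _ _).trans (Finset.sum_le_sum fun i _ => ?_)
  refine (Finset.abs_sum_le_sum_abs _ _).trans (Finset.sum_le_sum fun j _ => ?_)
  rw [abs_mul, abs_mul, abs_of_nonneg (hA i j), Pi.abs_apply, Pi.abs_apply]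

end Matrix

namespace EuclideanSpace

variable {m p : Type*} [Fintype m] [Fintype p]

theorem norm_sq_eq_sum_norm_sq_curry {𝕜 : Type*} [RCLike 𝕜] (x : EuclideanSpace 𝕜 (m × p)) :
    ‖x‖ ^ 2 = ∑ i, ‖WithLp.toLp 2 (fun k => x (i, k))‖ ^ 2 := by
  simp [EuclideanSpace.norm_sq_eq, Fintype.sum_prod_type]

theorem real_norm_sq_eq_dotProduct (x : EuclideanSpace ℝ m) : ‖x‖ ^ 2 = x ⬝ᵥ x := by
  rw [← real_inner_self_eq_norm_sq, EuclideanSpace.inner_eq_star_dotProduct, star_trivial]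

theorem norm_toLp_kroneckerVec (y : EuclideanSpace ℝ m) (w : EuclideanSpace ℝ p) :
    ‖WithLp.toLp 2 (kroneckerVec y w)‖ = ‖y‖ * ‖w‖ := by
  rw [← sq_eq_sq₀ (norm_nonneg _) (by positivity), mul_pow]
  simp only [real_norm_sq_eq_dotProduct, kroneckerVec_dotProduct_kroneckerVec]

end EuclideanSpace

theorem ContinuousLinearMap.exists_norm_eq_one_opNorm_eq_abs_inner {E : Type*}
    [NormedAddCommGroup E] [InnerProductSpace ℝ E] [FiniteDimensional ℝ E] [Nontrivial E]
    (T : E →L[ℝ] E) (hT : (T : E →ₗ[ℝ] E).IsSymmetric) :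
    ∃ x : E, ‖x‖ = 1 ∧ ‖T‖ = |⟪x, T x⟫| := by
  have hsphere : (Metric.sphere (0 : E) 1).Nonempty := NormedSpace.sphere_nonempty.2 zero_le_one
  obtain ⟨x₀, hx₀, hmax⟩ := (isCompact_sphere (0 : E) 1).exists_isMaxOn hsphere
    (f := fun x => |⟪x, T x⟫|) (by fun_prop)
  rw [mem_sphere_zero_iff_norm] at hx₀
  have rayleigh_of_norm_eq_one {x : E} (hx : ‖x‖ = 1) : T.rayleighQuotient x = ⟪x, T x⟫ := by
    simp [rayleighQuotient, reApplyInnerSelf, hx, real_inner_comm]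
  refine ⟨x₀, hx₀, le_antisymm ?_ ?_⟩
  · rw [T.norm_eq_iSup_rayleighQuotient hT]
    refine ciSup_le fun x => ?_
    obtain rfl | hx := eq_or_ne x 0
    · simp
    have hu : ‖‖x‖⁻¹ • x‖ = 1 := norm_smul_inv_norm hx
    rw [← T.rayleigh_smul x (inv_ne_zero (norm_ne_zero_iff.2 hx)), rayleigh_of_norm_eq_one hu]
    exact hmax (mem_sphere_zero_iff_norm.2 hu)
  · rw [← rayleigh_of_norm_eq_one hx₀]
    exact T.rayleighQuotient_le_norm x₀

section specNorm

variable {m n : Type*} [Fintype m] [DecidableEq m] [Fintype n] [DecidableEq n]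

theorem specNorm_add_le (M N : Matrix n n ℝ) : specNorm (M + N) ≤ specNorm M + specNorm N := by
  simp only [specNorm, map_add]
  exact norm_add_le _ _

theorem dotProduct_mulVec_le_specNorm (M : Matrix n n ℝ) {x : EuclideanSpace ℝ n}
    (hx : ‖x‖ = 1) : x ⬝ᵥ M *ᵥ x ≤ specNorm M := by
  rw [← inner_toEuclideanCLM]
  calc ⟪x, toEuclideanCLM (𝕜 := ℝ) M x⟫ ≤ ‖x‖ * ‖toEuclideanCLM (𝕜 := ℝ) M x‖ :=
        real_inner_le_norm _ _
    _ ≤ ‖x‖ * (specNorm M * ‖x‖) := by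
        gcongr
        exact (toEuclideanCLM (𝕜 := ℝ) M).le_opNorm x
    _ = specNorm M := by rw [hx, one_mul, mul_one]

theorem specNorm_reindex (e : m ≃ n) (M : Matrix m m ℝ) :
    specNorm (reindex e e M) = specNorm M := by
  let L := LinearIsometryEquiv.piLpCongrLeft 2 ℝ ℝ e
  have hconj : toEuclideanCLM (𝕜 := ℝ) (reindex e e M)
      = (L : EuclideanSpace ℝ m →L[ℝ] EuclideanSpace ℝ n).comp
          ((toEuclideanCLM (𝕜 := ℝ) M).comp
            (L.symm : EuclideanSpace ℝ n →L[ℝ] EuclideanSpace ℝ m)) := by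
    ext x i
    simp only [L, ContinuousLinearMap.comp_apply, ofLp_toEuclideanCLM, reindex_apply,
      ContinuousLinearEquiv.coe_coe, LinearIsometryEquiv.coe_toContinuousLinearEquiv,
      LinearIsometryEquiv.piLpCongrLeft_apply, LinearIsometryEquiv.piLpCongrLeft_symm,
      mulVec, dotProduct, submatrix_apply, Equiv.piCongrLeft'_apply]
    rw [← e.symm.sum_comp]
    simp
  rw [specNorm, hconj, ContinuousLinearMap.opNorm_linearIsometryEquiv_comp,
    ContinuousLinearMap.opNorm_comp_linearIsometryEquiv, specNorm]

theorem specNorm_one_kronecker_le (B : Matrix n n ℝ) :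
    specNorm ((1 : Matrix m m ℝ) ⊗ₖ B) ≤ specNorm B := by
  refine ContinuousLinearMap.opNorm_le_bound _ (norm_nonneg _) fun x => ?_
  let slice (v : EuclideanSpace ℝ (m × n)) (i : m) : EuclideanSpace ℝ n :=
    WithLp.toLp 2 fun k => v (i, k)
  have slice_apply (i : m) : slice (toEuclideanCLM (𝕜 := ℝ) ((1 : Matrix m m ℝ) ⊗ₖ B) x) i
      = toEuclideanCLM (𝕜 := ℝ) B (slice x i) := by
    ext k
    simp [slice, one_kronecker_mulVec_apply]
  refine (pow_le_pow_iff_left₀ (norm_nonneg _) (mul_nonneg (norm_nonneg _) (norm_nonneg _))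
    two_ne_zero).1 ?_
  calc ‖toEuclideanCLM (𝕜 := ℝ) ((1 : Matrix m m ℝ) ⊗ₖ B) x‖ ^ 2
      = ∑ i, ‖toEuclideanCLM (𝕜 := ℝ) B (slice x i)‖ ^ 2 := by
        simp_rw [← slice_apply]
        exact EuclideanSpace.norm_sq_eq_sum_norm_sq_curry _
    _ ≤ ∑ i, (specNorm B * ‖slice x i‖) ^ 2 := by
        gcongr with i
        exact (toEuclideanCLM (𝕜 := ℝ) B).le_opNorm _
    _ = (specNorm B * ‖x‖) ^ 2 := by
        simp only [mul_pow, ← Finset.mul_sum, slice, EuclideanSpace.norm_sq_eq_sum_norm_sq_curry x]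

theorem specNorm_kronecker_one_le (A : Matrix m m ℝ) :
    specNorm (A ⊗ₖ (1 : Matrix n n ℝ)) ≤ specNorm A := by
  rw [kronecker_one_eq_reindex_one_kronecker, specNorm_reindex]
  exact specNorm_one_kronecker_le A

theorem specNorm_kroneckerSum_le (A : Matrix m m ℝ) (B : Matrix n n ℝ) :
    specNorm (A ⊗ₖ (1 : Matrix n n ℝ) + (1 : Matrix m m ℝ) ⊗ₖ B) ≤ specNorm A + specNorm B :=
  (specNorm_add_le _ _).trans (add_le_add (specNorm_kronecker_one_le A) (specNorm_one_kronecker_le B))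

theorem exists_norm_eq_one_specNorm_eq_dotProduct_mulVec [Nonempty n] {A : Matrix n n ℝ}
    (hA : A.IsSymm) (hA₀ : ∀ i j, 0 ≤ A i j) :
    ∃ y : EuclideanSpace ℝ n, ‖y‖ = 1 ∧ specNorm A = y ⬝ᵥ A *ᵥ y := by
  have hsymm : (toEuclideanCLM (𝕜 := ℝ) A : EuclideanSpace ℝ n →ₗ[ℝ] _).IsSymmetric := by
    rw [coe_toEuclideanCLM_eq_toEuclideanLin, isSymmetric_toEuclideanLin_iff]
    exact hA
  obtain ⟨x, hx, hxA⟩ := (toEuclideanCLM (𝕜 := ℝ) A).exists_norm_eq_one_opNorm_eq_abs_inner hsymm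
  let y : EuclideanSpace ℝ n := WithLp.toLp 2 |x.ofLp|
  have hy : ‖y‖ = 1 := by
    rw [← hx]
    simp [y, EuclideanSpace.norm_eq]
  refine ⟨y, hy, le_antisymm ?_ (dotProduct_mulVec_le_specNorm A hy)⟩
  calc specNorm A = |x ⬝ᵥ A *ᵥ x| := by rw [specNorm, hxA, inner_toEuclideanCLM]
    _ ≤ y ⬝ᵥ A *ᵥ y := abs_dotProduct_mulVec_le hA₀ _ _

end specNorm

theorem specNorm_kronecker_sum {m p : Type*} [Fintype m] [DecidableEq m] [Nonempty m]
    [Fintype p] [DecidableEq p] [Nonempty p] (A : Matrix m m ℝ) (B : Matrix p p ℝ) :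
    specNorm (A ⊗ₖ (1 : Matrix p p ℝ) + (1 : Matrix m m ℝ) ⊗ₖ B) ≤ specNorm A + specNorm B ∧
    (A.IsSymm → B.IsSymm → (∀ i j, 0 ≤ A i j) → (∀ i j, 0 ≤ B i j) →
      specNorm (A ⊗ₖ (1 : Matrix p p ℝ) + (1 : Matrix m m ℝ) ⊗ₖ B) = specNorm A + specNorm B) := by
  refine ⟨specNorm_kroneckerSum_le A B, fun hA hB hA₀ hB₀ => ?_⟩
  refine le_antisymm (specNorm_kroneckerSum_le A B) ?_
  obtain ⟨y, hy, hAy⟩ := exists_norm_eq_one_specNorm_eq_dotProduct_mulVec hA hA₀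
  obtain ⟨w, hw, hBw⟩ := exists_norm_eq_one_specNorm_eq_dotProduct_mulVec hB hB₀
  have hyy : y ⬝ᵥ y = 1 := by rw [← EuclideanSpace.real_norm_sq_eq_dotProduct, hy, one_pow]
  have hww : w ⬝ᵥ w = 1 := by rw [← EuclideanSpace.real_norm_sq_eq_dotProduct, hw, one_pow]
  have hz : ‖WithLp.toLp 2 (kroneckerVec y w)‖ = 1 := by
    rw [EuclideanSpace.norm_toLp_kroneckerVec, hy, hw, one_mul]
  calc specNorm A + specNorm B
      = kroneckerVec y w ⬝ᵥ (A ⊗ₖ (1 : Matrix p p ℝ) + (1 : Matrix m m ℝ) ⊗ₖ B) *ᵥ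
          kroneckerVec y w := by
        rw [kroneckerVec_dotProduct_kroneckerSum_mulVec, hyy, hww, mul_one, one_mul, hAy, hBw]
    _ ≤ _ := dotProduct_mulVec_le_specNorm _ hz
end

section
/- Define ADV(f) for a function f : S → Σ with S ⊆ {0,1}^n as the maximum over nonzero symmetric entrywise-nonnegative S×S matrices Γ with Γ_{xy} = 0 whenever f(x) = f(y), of ‖Γ‖ / max_i ‖Γ ∘ D_i‖, where (D_i)_{xy} = 1 iff x_i ≠ y_i. For the direct sum function f^(t) : S^t → Σ^t defined by f^(t)(x^1,…,x^t) = (f(x^1),…,f(x^t)), we have ADV(f^(t)) ≥ t · ADV(f). -/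
open Matrix

/-- The difference matrix for coordinate `i`: `(Dᵢ)_{xy} = 1` iff the inputs of `x` and `y`
differ in coordinate `i`. -/
def diffMatrix {V ι : Type*} (inp : V → ι → Bool) (i : ι) : Matrix V V ℝ :=
  Matrix.of fun x y => if inp x i ≠ inp y i then (1 : ℝ) else 0

/-- The (nonnegative-weight) adversary bound of `f`, where each element `x` of the domain `V`
has input string `inp x`. -/
noncomputable def ADV {V ι σ : Type*} [Fintype V] [DecidableEq V] [Fintype ι]
    (inp : V → ι → Bool) (f : V → σ) : ℝ :=
  sSup { r : ℝ | ∃ Γ : Matrix V V ℝ, Γ ≠ 0 ∧ Γ.IsSymm ∧ (∀ x y, 0 ≤ Γ x y) ∧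
    (∀ x y, f x = f y → Γ x y = 0) ∧
    r = specNorm Γ / ⨆ i : ι, specNorm (Γ ⊙ diffMatrix inp i) }


/-!
The witness for `f^(t)` is `Γ^(t) = ∑ⱼ Γ.onCoord j`, where `Γ.onCoord j` acts as `Γ` on copy `j`
and as the identity on the other copies. The norm of a symmetric matrix is the supremum of its
Rayleigh quotient. The quadratic form of `A.onCoord j` is a sum of quadratic forms of `A` over the
slices in which all copies but `j` are fixed, so `‖A.onCoord j‖ ≤ ‖A‖`; on a tensor power `v^{⊗t}`
the quadratic form of `∑ⱼ A.onCoord j` is `t` times that of `A`, so `t ‖A‖ ≤ ‖∑ⱼ A.onCoord j‖`.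
Since `Γ^(t) ⊙ D_(j,i) = (Γ ⊙ D_i).onCoord j`, the denominator of the ratio does not change while
the numerator grows by the factor `t`.

`ADV` is a real `sSup`, which is `0` on an unbounded set. If `f` is a function of the input, the
ratios of `f` and of `f^(t)` are bounded. Otherwise `ADV f = 0`: either every ratio is `0 / 0`, or
a heavy weight on a pair with equal inputs, which no `D_i` sees, makes the ratios unbounded.
-/

open scoped RealInnerProductSpace

section SpecNorm

variable {V : Type*} [Fintype V] [DecidableEq V]

lemma specNorm_nonneg (A : Matrix V V ℝ) : 0 ≤ specNorm A := norm_nonneg _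

lemma specNorm_eq_zero {A : Matrix V V ℝ} : specNorm A = 0 ↔ A = 0 := by
  rw [specNorm, norm_eq_zero, EmbeddingLike.map_eq_zero_iff]

lemma specNorm_smul (c : ℝ) (A : Matrix V V ℝ) : specNorm (c • A) = |c| * specNorm A := by
  rw [specNorm, specNorm, map_smul, norm_smul, Real.norm_eq_abs]

lemma abs_dotProduct_mulVec_self_le (A : Matrix V V ℝ) (v : V → ℝ) :
    |v ⬝ᵥ A *ᵥ v| ≤ specNorm A * (v ⬝ᵥ v) := by
  set x : EuclideanSpace ℝ V := WithLp.toLp 2 v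
  have hx : ‖x‖ ^ 2 = v ⬝ᵥ v := by
    rw [← real_inner_self_eq_norm_sq, EuclideanSpace.inner_toLp_toLp]; simp
  calc |v ⬝ᵥ A *ᵥ v| = |⟪x, toEuclideanCLM (𝕜 := ℝ) A x⟫| := by
        rw [inner_toEuclideanCLM]
    _ ≤ ‖x‖ * ‖toEuclideanCLM (𝕜 := ℝ) A x‖ := abs_real_inner_le_norm _ _
    _ ≤ ‖x‖ * (specNorm A * ‖x‖) := by gcongr; exact ContinuousLinearMap.le_opNorm _ _
    _ = specNorm A * (v ⬝ᵥ v) := by rw [← hx]; ring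

lemma specNorm_le_of_abs_dotProduct_mulVec_self_le {A : Matrix V V ℝ} (hA : A.IsSymm) {c : ℝ}
    (hc : 0 ≤ c) (h : ∀ v, |v ⬝ᵥ A *ᵥ v| ≤ c * (v ⬝ᵥ v)) : specNorm A ≤ c := by
  have hT : (toEuclideanCLM (𝕜 := ℝ) A : EuclideanSpace ℝ V →ₗ[ℝ] _).IsSymmetric := by
    rw [coe_toEuclideanCLM_eq_toEuclideanLin, isSymmetric_toEuclideanLin_iff]
    exact hA
  rw [specNorm, ContinuousLinearMap.norm_eq_iSup_rayleighQuotient _ hT]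
  refine ciSup_le fun x => ?_
  have hx : ‖x‖ ^ 2 = x.ofLp ⬝ᵥ x.ofLp := by
    rw [← real_inner_self_eq_norm_sq, EuclideanSpace.inner_eq_star_dotProduct]; simp
  rw [ContinuousLinearMap.rayleighQuotient, ContinuousLinearMap.reApplyInnerSelf_apply,
    RCLike.re_to_real, real_inner_comm, inner_toEuclideanCLM, abs_div, abs_sq, hx]
  exact div_le_of_le_mul₀ (dotProduct_self_star_nonneg _) hc (h _)

lemma abs_apply_le_specNorm (A : Matrix V V ℝ) (x y : V) : |A x y| ≤ specNorm A := by
  set e : EuclideanSpace ℝ V := WithLp.toLp 2 (Pi.single y 1)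
  calc |A x y| = ‖toEuclideanCLM (𝕜 := ℝ) A e x‖ := by simp [e, Real.norm_eq_abs]
    _ ≤ ‖toEuclideanCLM (𝕜 := ℝ) A e‖ := PiLp.norm_apply_le _ _
    _ ≤ specNorm A * ‖e‖ := ContinuousLinearMap.le_opNorm _ _
    _ = specNorm A := by simp [e]

lemma specNorm_le_sum_abs {A : Matrix V V ℝ} (hA : A.IsSymm) :
    specNorm A ≤ ∑ x, ∑ y, |A x y| := by
  refine specNorm_le_of_abs_dotProduct_mulVec_self_le hA
    (Finset.sum_nonneg fun x _ => Finset.sum_nonneg fun y _ => abs_nonneg _) fun v => ?_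
  have hsq (x : V) : v x ^ 2 ≤ v ⬝ᵥ v := by
    simpa [dotProduct, sq] using
      Finset.single_le_sum (fun y _ => mul_self_nonneg (v y)) (Finset.mem_univ x)
  have hprod (x y : V) : |v x * v y| ≤ v ⬝ᵥ v := by
    rw [abs_mul]
    nlinarith [hsq x, hsq y, sq_abs (v x), sq_abs (v y), sq_nonneg (|v x| - |v y|)]
  have hexpand : v ⬝ᵥ A *ᵥ v = ∑ x, ∑ y, A x y * (v x * v y) := by
    simp only [dotProduct, mulVec, Finset.mul_sum]
    exact Finset.sum_congr rfl fun x _ => Finset.sum_congr rfl fun y _ => by ring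
  rw [hexpand, Finset.sum_mul]
  refine (Finset.abs_sum_le_sum_abs _ _).trans (Finset.sum_le_sum fun x _ => ?_)
  rw [Finset.sum_mul]
  refine (Finset.abs_sum_le_sum_abs _ _).trans (Finset.sum_le_sum fun y _ => ?_)
  rw [abs_mul]
  exact mul_le_mul_of_nonneg_left (hprod x y) (abs_nonneg _)

end SpecNorm

def tensorPow {V : Type*} (v : V → ℝ) (ι : Type*) [Fintype ι] : (ι → V) → ℝ :=
  fun X => ∏ k, v (X k)

def coordSlice {ι V : Type*} [DecidableEq ι] (w : (ι → V) → ℝ) (j : ι)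
    (r : {k // k ≠ j} → V) : V → ℝ :=
  fun b => w ((Equiv.funSplitAt j V).symm (b, r))

lemma sum_eq_sum_sum_funSplitAt_symm {ι V M : Type*} [Fintype ι] [DecidableEq ι] [Fintype V]
    [AddCommMonoid M] (j : ι) (F : (ι → V) → M) :
    ∑ X, F X = ∑ r, ∑ b, F ((Equiv.funSplitAt j V).symm (b, r)) := by
  rw [← (Equiv.funSplitAt j V).symm.sum_comp, Fintype.sum_prod_type, Finset.sum_comm]

lemma dotProduct_self_eq_sum_coordSlice {ι V : Type*} [Fintype ι] [DecidableEq ι] [Fintype V]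
    (j : ι) (w : (ι → V) → ℝ) :
    w ⬝ᵥ w = ∑ r, coordSlice w j r ⬝ᵥ coordSlice w j r :=
  sum_eq_sum_sum_funSplitAt_symm j _

lemma coordSlice_tensorPow {ι V : Type*} [Fintype ι] [DecidableEq ι] (v : V → ℝ) (j : ι)
    (r : {k // k ≠ j} → V) :
    coordSlice (tensorPow v ι) j r = (∏ k, v (r k)) • v := by
  ext b
  have hr (k : {k // k ≠ j}) : (Equiv.funSplitAt j V).symm (b, r) k = r k := by
    simp [Equiv.funSplitAt_symm_apply, k.2]
  simp only [coordSlice, tensorPow, Fintype.prod_eq_mul_prod_subtype_ne _ j, hr]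
  simp [Equiv.funSplitAt_symm_apply, mul_comm]

section OnCoord

variable {ι V : Type*} [Fintype ι] [DecidableEq ι] [DecidableEq V]

def Matrix.onCoord (A : Matrix V V ℝ) (j : ι) : Matrix (ι → V) (ι → V) ℝ :=
  of fun X Y => if ∀ k, k ≠ j → X k = Y k then A (X j) (Y j) else 0

lemma onCoord_funSplitAt_symm (A : Matrix V V ℝ) (j : ι) (a b : V) (r r' : {k // k ≠ j} → V) :
    A.onCoord j ((Equiv.funSplitAt j V).symm (a, r)) ((Equiv.funSplitAt j V).symm (b, r')) =
      if r = r' then A a b else 0 := by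
  refine if_congr ?_ (by simp) rfl
  simp +contextual [funext_iff]

lemma onCoord_isSymm {A : Matrix V V ℝ} (hA : A.IsSymm) (j : ι) : (A.onCoord j).IsSymm := by
  ext X Y
  simp only [transpose_apply, Matrix.onCoord, of_apply, hA.apply (X j)]
  exact if_congr (forall₂_congr fun k _ => eq_comm) rfl rfl

variable [Fintype V]

lemma onCoord_mulVec_funSplitAt_symm (A : Matrix V V ℝ) (j : ι) (w : (ι → V) → ℝ) (a : V)
    (r : {k // k ≠ j} → V) :
    (A.onCoord j *ᵥ w) ((Equiv.funSplitAt j V).symm (a, r)) = (A *ᵥ coordSlice w j r) a := by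
  rw [mulVec, dotProduct, ← (Equiv.funSplitAt j V).symm.sum_comp, Fintype.sum_prod_type]
  simp [onCoord_funSplitAt_symm, coordSlice, mulVec, dotProduct]

lemma dotProduct_onCoord_mulVec (A : Matrix V V ℝ) (j : ι) (w : (ι → V) → ℝ) :
    w ⬝ᵥ A.onCoord j *ᵥ w = ∑ r, coordSlice w j r ⬝ᵥ A *ᵥ coordSlice w j r := by
  simp only [dotProduct, sum_eq_sum_sum_funSplitAt_symm j (fun X => w X * _),
    onCoord_mulVec_funSplitAt_symm]
  rfl

lemma specNorm_onCoord_le {A : Matrix V V ℝ} (hA : A.IsSymm) (j : ι) :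
    specNorm (A.onCoord j) ≤ specNorm A := by
  refine specNorm_le_of_abs_dotProduct_mulVec_self_le (onCoord_isSymm hA j) (specNorm_nonneg A)
    fun w => ?_
  rw [dotProduct_onCoord_mulVec, dotProduct_self_eq_sum_coordSlice j, Finset.mul_sum]
  exact (Finset.abs_sum_le_sum_abs _ _).trans
    (Finset.sum_le_sum fun r _ => abs_dotProduct_mulVec_self_le _ _)

lemma dotProduct_onCoord_mulVec_tensorPow_mul (A : Matrix V V ℝ) (j : ι) (v : V → ℝ) :
    (tensorPow v ι ⬝ᵥ A.onCoord j *ᵥ tensorPow v ι) * (v ⬝ᵥ v) =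
      (v ⬝ᵥ A *ᵥ v) * (tensorPow v ι ⬝ᵥ tensorPow v ι) := by
  rw [dotProduct_onCoord_mulVec, dotProduct_self_eq_sum_coordSlice j]
  simp only [coordSlice_tensorPow, mulVec_smul, smul_dotProduct, dotProduct_smul, smul_eq_mul,
    Finset.sum_mul, Finset.mul_sum]
  exact Finset.sum_congr rfl fun r _ => by ring

lemma card_mul_specNorm_le_specNorm_sum_onCoord {A : Matrix V V ℝ} (hA : A.IsSymm)
    (s : Finset ι) : s.card * specNorm A ≤ specNorm (∑ j ∈ s, A.onCoord j) := by
  suffices h : specNorm ((s.card : ℝ) • A) ≤ specNorm (∑ j ∈ s, A.onCoord j) by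
    rwa [specNorm_smul, abs_of_nonneg (Nat.cast_nonneg _)] at h
  refine specNorm_le_of_abs_dotProduct_mulVec_self_le (hA.smul _) (specNorm_nonneg _) fun v => ?_
  rcases eq_or_ne v 0 with rfl | hv
  · simp
  set w := tensorPow v ι
  have hw : 0 < w ⬝ᵥ w := by
    obtain ⟨x, hx⟩ := Function.ne_iff.mp hv
    refine lt_of_le_of_ne (dotProduct_star_self_nonneg w) (Ne.symm ?_)
    refine mt dotProduct_self_eq_zero.mp (Function.ne_iff.mpr ⟨fun _ => x, ?_⟩)
    simpa [w, tensorPow] using pow_ne_zero (Fintype.card ι) hx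
  have hv0 : 0 ≤ v ⬝ᵥ v := Finset.sum_nonneg fun _ _ => mul_self_nonneg _
  have hsum : (w ⬝ᵥ (∑ j ∈ s, A.onCoord j) *ᵥ w) * (v ⬝ᵥ v) =
      (v ⬝ᵥ ((s.card : ℝ) • A) *ᵥ v) * (w ⬝ᵥ w) := by
    simp only [w, sum_mulVec, dotProduct_sum, Finset.sum_mul,
      dotProduct_onCoord_mulVec_tensorPow_mul, smul_mulVec, dotProduct_smul, Finset.sum_const,
      nsmul_eq_mul, smul_eq_mul]
    ring
  refine le_of_mul_le_mul_right ?_ hw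
  calc |v ⬝ᵥ ((s.card : ℝ) • A) *ᵥ v| * (w ⬝ᵥ w)
      = |w ⬝ᵥ (∑ j ∈ s, A.onCoord j) *ᵥ w| * (v ⬝ᵥ v) := by
        rw [← abs_of_pos hw, ← abs_mul, ← hsum, abs_mul, abs_of_nonneg hv0]
    _ ≤ specNorm (∑ j ∈ s, A.onCoord j) * (w ⬝ᵥ w) * (v ⬝ᵥ v) := by
        gcongr
        exact abs_dotProduct_mulVec_self_le _ _
    _ = _ := by ring

lemma specNorm_onCoord {A : Matrix V V ℝ} (hA : A.IsSymm) (j : ι) :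
    specNorm (A.onCoord j) = specNorm A := by
  refine le_antisymm (specNorm_onCoord_le hA j) ?_
  simpa using card_mul_specNorm_le_specNorm_sum_onCoord hA {j}

end OnCoord

section Adversary

variable {V ι σ : Type*}

def IsAdversaryMatrix (f : V → σ) (Γ : Matrix V V ℝ) : Prop :=
  Γ ≠ 0 ∧ Γ.IsSymm ∧ (∀ x y, 0 ≤ Γ x y) ∧ ∀ x y, f x = f y → Γ x y = 0

lemma diffMatrix_isSymm (inp : V → ι → Bool) (i : ι) : (diffMatrix inp i).IsSymm := by
  ext x y
  simp [diffMatrix, eq_comm]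

lemma hadamard_diffMatrix_apply_of_ne {inp : V → ι → Bool} {i : ι} (Γ : Matrix V V ℝ) {x y : V}
    (h : inp x i ≠ inp y i) : (Γ ⊙ diffMatrix inp i) x y = Γ x y := by
  simp [diffMatrix, h]

lemma hadamard_diffMatrix_isSymm {Γ : Matrix V V ℝ} (hΓ : Γ.IsSymm) (inp : V → ι → Bool)
    (i : ι) : (Γ ⊙ diffMatrix inp i).IsSymm := by
  rw [IsSymm, transpose_hadamard, hΓ.eq, (diffMatrix_isSymm inp i).eq]

variable [DecidableEq V]

def pairMatrix (a b : V) : Matrix V V ℝ :=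
  of fun x y => if (x = a ∧ y = b) ∨ (x = b ∧ y = a) then 1 else 0

lemma pairMatrix_isSymm (a b : V) : (pairMatrix a b).IsSymm := by
  ext x y
  simp only [transpose_apply, pairMatrix, of_apply]
  exact if_congr (by tauto) rfl rfl

lemma pairMatrix_nonneg (a b x y : V) : 0 ≤ pairMatrix a b x y := by
  simp only [pairMatrix, of_apply]
  split_ifs <;> norm_num

lemma pairMatrix_apply_left (a b : V) : pairMatrix a b a b = 1 := by
  simp [pairMatrix]

lemma pairMatrix_apply_eq_zero {f : V → σ} {a b : V} (hab : f a ≠ f b) {x y : V}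
    (hxy : f x = f y) : pairMatrix a b x y = 0 := by
  simp only [pairMatrix, of_apply]
  rw [if_neg]
  rintro (⟨rfl, rfl⟩ | ⟨rfl, rfl⟩)
  exacts [hab hxy, hab hxy.symm]

lemma pairMatrix_hadamard_diffMatrix {inp : V → ι → Bool} {a b : V} (hab : inp a = inp b)
    (i : ι) : pairMatrix a b ⊙ diffMatrix inp i = 0 := by
  ext x y
  rw [hadamard_apply, Matrix.zero_apply]
  by_cases h : (x = a ∧ y = b) ∨ (x = b ∧ y = a)
  · rcases h with ⟨rfl, rfl⟩ | ⟨rfl, rfl⟩ <;> simp [diffMatrix, hab]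
  · simp [pairMatrix, h]

lemma le_smul_pairMatrix_add_apply {M : ℝ} (x y a b : V) :
    M ≤ (M • pairMatrix x y + pairMatrix a b) x y := by
  have h := pairMatrix_nonneg a b x y
  simp only [Matrix.add_apply, Matrix.smul_apply, pairMatrix_apply_left, smul_eq_mul, mul_one]
  linarith

lemma isAdversaryMatrix_smul_pairMatrix_add {f : V → σ} {x y a b : V} (hxy : f x ≠ f y)
    (hab : f a ≠ f b) {M : ℝ} (hM : 0 < M) :
    IsAdversaryMatrix f (M • pairMatrix x y + pairMatrix a b) := by
  refine ⟨fun h => ?_, ((pairMatrix_isSymm x y).smul M).add (pairMatrix_isSymm a b),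
    fun p q => add_nonneg (mul_nonneg hM.le (pairMatrix_nonneg ..)) (pairMatrix_nonneg ..),
    fun p q hpq => ?_⟩
  · have h' := le_smul_pairMatrix_add_apply (M := M) x y a b
    rw [h, Matrix.zero_apply] at h'
    linarith
  · simp [pairMatrix_apply_eq_zero hxy hpq, pairMatrix_apply_eq_zero hab hpq]

variable [Fintype V]

noncomputable def advRatio (inp : V → ι → Bool) (Γ : Matrix V V ℝ) : ℝ :=
  specNorm Γ / ⨆ i, specNorm (Γ ⊙ diffMatrix inp i)

lemma ADV_eq_sSup [Fintype ι] (inp : V → ι → Bool) (f : V → σ) :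
    ADV inp f = sSup (advRatio inp '' {Γ | IsAdversaryMatrix f Γ}) := by
  rw [ADV]
  congr 1
  ext r
  constructor
  · rintro ⟨Γ, h₀, h₁, h₂, h₃, rfl⟩
    exact ⟨Γ, ⟨h₀, h₁, h₂, h₃⟩, rfl⟩
  · rintro ⟨Γ, ⟨h₀, h₁, h₂, h₃⟩, rfl⟩
    exact ⟨Γ, h₀, h₁, h₂, h₃, rfl⟩

lemma advRatio_nonneg (inp : V → ι → Bool) (Γ : Matrix V V ℝ) : 0 ≤ advRatio inp Γ :=
  div_nonneg (specNorm_nonneg _) (Real.iSup_nonneg fun _ => specNorm_nonneg _)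

lemma ADV_nonneg [Fintype ι] (inp : V → ι → Bool) (f : V → σ) : 0 ≤ ADV inp f := by
  rw [ADV_eq_sSup]
  exact Real.sSup_nonneg (by rintro _ ⟨Γ, -, rfl⟩; exact advRatio_nonneg inp Γ)

lemma advRatio_le_card_sq [Finite ι] {inp : V → ι → Bool} {f : V → σ}
    (hsep : ∀ x y, f x ≠ f y → inp x ≠ inp y) {Γ : Matrix V V ℝ} (hΓ : IsAdversaryMatrix f Γ) :
    advRatio inp Γ ≤ Fintype.card V ^ 2 := by
  obtain ⟨-, hsymm, -, hzero⟩ := hΓ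
  set s := ⨆ i, specNorm (Γ ⊙ diffMatrix inp i)
  have hs : 0 ≤ s := Real.iSup_nonneg fun _ => specNorm_nonneg _
  have hentry (x y : V) : |Γ x y| ≤ s := by
    by_cases hxy : f x = f y
    · rw [hzero x y hxy, abs_zero]
      exact hs
    obtain ⟨i, hi⟩ := Function.ne_iff.mp (hsep x y hxy)
    rw [← hadamard_diffMatrix_apply_of_ne Γ hi]
    exact (abs_apply_le_specNorm _ x y).trans
      (le_ciSup (f := fun i => specNorm (Γ ⊙ diffMatrix inp i)) (Set.finite_range _).bddAbove i)
  refine div_le_of_le_mul₀ hs (by positivity) ?_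
  calc specNorm Γ ≤ ∑ x, ∑ y, |Γ x y| := specNorm_le_sum_abs hsymm
    _ ≤ ∑ _x : V, ∑ _y : V, s := by gcongr with x _ y _; exact hentry x y
    _ = Fintype.card V ^ 2 * s := by simp [sq, mul_assoc]

lemma not_bddAbove_advRatio_image [Finite ι] {inp : V → ι → Bool} {f : V → σ} {x y a b : V}
    {i : ι} (hxy : f x ≠ f y) (hinp : inp x = inp y) (hab : f a ≠ f b)
    (hi : inp a i ≠ inp b i) :
    ¬BddAbove (advRatio inp '' {Γ | IsAdversaryMatrix f Γ}) := by
  rintro ⟨c, hc⟩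
  set P := pairMatrix a b
  set s₀ := ⨆ k, specNorm (P ⊙ diffMatrix inp k)
  have hs₀ : 0 < s₀ := by
    have hPab : (P ⊙ diffMatrix inp i) a b = 1 := by
      rw [hadamard_diffMatrix_apply_of_ne _ hi]
      exact pairMatrix_apply_left a b
    calc 0 < |(P ⊙ diffMatrix inp i) a b| := by rw [hPab]; norm_num
      _ ≤ specNorm (P ⊙ diffMatrix inp i) := abs_apply_le_specNorm _ _ _
      _ ≤ s₀ := le_ciSup (f := fun k => specNorm (P ⊙ diffMatrix inp k))
          (Set.finite_range _).bddAbove i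
  set M := |c| * s₀ + 1
  have hM : 0 < M := by positivity
  set Γ := M • pairMatrix x y + P
  have hΓD (k : ι) : Γ ⊙ diffMatrix inp k = P ⊙ diffMatrix inp k := by
    rw [add_hadamard, smul_hadamard, pairMatrix_hadamard_diffMatrix hinp, smul_zero, zero_add]
  have hratio : advRatio inp Γ = specNorm Γ / s₀ := by simp only [advRatio, hΓD, s₀]
  have hc' := hc ⟨Γ, isAdversaryMatrix_smul_pairMatrix_add hxy hab hM, rfl⟩
  rw [hratio, div_le_iff₀ hs₀] at hc'
  have hΓnorm : M ≤ specNorm Γ := (le_smul_pairMatrix_add_apply x y a b).trans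
    ((le_abs_self _).trans (abs_apply_le_specNorm Γ x y))
  nlinarith [le_abs_self c]

lemma ADV_eq_zero_of_not_separating [Fintype ι] {inp : V → ι → Bool} {f : V → σ} {x y : V}
    (hxy : f x ≠ f y) (hinp : inp x = inp y) : ADV inp f = 0 := by
  refine le_antisymm ?_ (ADV_nonneg inp f)
  rw [ADV_eq_sSup]
  by_cases h : ∃ a b i, f a ≠ f b ∧ inp a i ≠ inp b i
  · obtain ⟨a, b, i, hab, hi⟩ := h
    rw [Real.sSup_of_not_bddAbove (not_bddAbove_advRatio_image hxy hinp hab hi)]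
  push Not at h
  refine Real.sSup_nonpos ?_
  rintro _ ⟨Γ, ⟨-, -, -, hzero⟩, rfl⟩
  have hD (i : ι) : Γ ⊙ diffMatrix inp i = 0 := by
    ext p q
    by_cases hpq : f p = f q
    · simp [hzero p q hpq]
    · simp [diffMatrix, h p q i hpq]
  simp [advRatio, hD, specNorm]

end Adversary

section DirectSum

variable {V ι κ σ : Type*} [Fintype ι] [DecidableEq ι] [DecidableEq V]

lemma sum_onCoord_hadamard_diffMatrix (Γ : Matrix V V ℝ) (inp : V → κ → Bool) (j : ι) (i : κ) :
    (∑ j', Γ.onCoord j') ⊙ diffMatrix (fun (X : ι → V) (q : ι × κ) => inp (X q.1) q.2) (j, i) =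
      (Γ ⊙ diffMatrix inp i).onCoord j := by
  ext X Y
  rw [hadamard_apply, Matrix.sum_apply, Finset.sum_mul, Finset.sum_eq_single j]
  · simp only [Matrix.onCoord, diffMatrix, of_apply, hadamard_apply]
    split_ifs <;> simp
  · intro j' _ hj'
    by_cases hXY : X j = Y j
    · simp [diffMatrix, hXY]
    · rw [show Γ.onCoord j' X Y = 0 from if_neg fun h => hXY (h j (Ne.symm hj')), zero_mul]
  · simp

variable [Fintype V]

lemma isAdversaryMatrix_sum_onCoord [Nonempty ι] {f : V → σ} {Γ : Matrix V V ℝ}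
    (hΓ : IsAdversaryMatrix f Γ) :
    IsAdversaryMatrix (fun (X : ι → V) j => f (X j)) (∑ j, Γ.onCoord j) := by
  obtain ⟨hne, hsymm, hnonneg, hzero⟩ := hΓ
  refine ⟨fun h => hne ?_, ?_, fun X Y => ?_, fun X Y hXY => ?_⟩
  · have hcard := card_mul_specNorm_le_specNorm_sum_onCoord hsymm (Finset.univ : Finset ι)
    rw [h, specNorm_eq_zero.mpr rfl, Finset.card_univ] at hcard
    exact specNorm_eq_zero.mp (le_antisymm (nonpos_of_mul_nonpos_right hcard
      (by exact_mod_cast Fintype.card_pos)) (specNorm_nonneg Γ))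
  · rw [IsSymm, transpose_sum]
    exact Finset.sum_congr rfl fun j _ => (onCoord_isSymm hsymm j).eq
  · rw [Matrix.sum_apply]
    refine Finset.sum_nonneg fun j _ => ?_
    simp only [Matrix.onCoord, of_apply]
    split_ifs
    exacts [hnonneg _ _, le_rfl]
  · rw [Matrix.sum_apply]
    refine Finset.sum_eq_zero fun j _ => ?_
    simp [Matrix.onCoord, hzero _ _ (congrFun hXY j)]

lemma card_mul_advRatio_le_advRatio_sum_onCoord {Γ : Matrix V V ℝ} (hΓ : Γ.IsSymm)
    (inp : V → κ → Bool) :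
    Fintype.card ι * advRatio inp Γ ≤
      advRatio (fun (X : ι → V) (q : ι × κ) => inp (X q.1) q.2) (∑ j, Γ.onCoord j) := by
  rcases isEmpty_or_nonempty ι with hι | hι
  · simpa using advRatio_nonneg _ _
  have hden : ⨆ q : ι × κ, specNorm ((∑ j, Γ.onCoord j) ⊙
      diffMatrix (fun (X : ι → V) (q : ι × κ) => inp (X q.1) q.2) q) =
      ⨆ i, specNorm (Γ ⊙ diffMatrix inp i) := by
    rw [← (Prod.snd_surjective (α := ι) (β := κ)).iSup_comp]
    congr 1
    ext ⟨j, i⟩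
    rw [sum_onCoord_hadamard_diffMatrix, specNorm_onCoord (hadamard_diffMatrix_isSymm hΓ inp i)]
  rw [advRatio, advRatio, hden, ← mul_div_assoc]
  refine div_le_div_of_nonneg_right ?_ (Real.iSup_nonneg fun _ => specNorm_nonneg _)
  simpa using card_mul_specNorm_le_specNorm_sum_onCoord hΓ (Finset.univ : Finset ι)

lemma card_mul_advRatio_le_ADV [Fintype κ] {inp : V → κ → Bool} {f : V → σ}
    (hsep : ∀ x y, f x ≠ f y → inp x ≠ inp y) {Γ : Matrix V V ℝ} (hΓ : IsAdversaryMatrix f Γ) :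
    Fintype.card ι * advRatio inp Γ ≤
      ADV (fun (X : ι → V) (q : ι × κ) => inp (X q.1) q.2) (fun (X : ι → V) j => f (X j)) := by
  rcases isEmpty_or_nonempty ι with hι | hι
  · simpa using ADV_nonneg _ _
  have hsep' (X Y : ι → V) (hXY : (fun j => f (X j)) ≠ fun j => f (Y j)) :
      (fun q : ι × κ => inp (X q.1) q.2) ≠ fun q => inp (Y q.1) q.2 := by
    obtain ⟨j, hj⟩ := Function.ne_iff.mp hXY
    obtain ⟨i, hi⟩ := Function.ne_iff.mp (hsep _ _ hj)
    exact Function.ne_iff.mpr ⟨(j, i), hi⟩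
  rw [ADV_eq_sSup]
  refine (card_mul_advRatio_le_advRatio_sum_onCoord hΓ.2.1 inp).trans
    (le_csSup ⟨(Fintype.card (ι → V) : ℝ) ^ 2, ?_⟩ ⟨_, isAdversaryMatrix_sum_onCoord hΓ, rfl⟩)
  rintro _ ⟨Γ', hΓ', rfl⟩
  exact advRatio_le_card_sq hsep' hΓ'

end DirectSum

theorem adv_direct_sum_general {V σ : Type*} [Fintype V] [DecidableEq V] {n : ℕ}
    (inp : V → Fin n → Bool) (f : V → σ) (t : ℕ) :
    (t : ℝ) * ADV inp f ≤
      ADV (fun (x : Fin t → V) (q : Fin t × Fin n) => inp (x q.1) q.2)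
        (fun (x : Fin t → V) (j : Fin t) => f (x j)) := by
  by_cases hsep : ∀ x y, f x ≠ f y → inp x ≠ inp y
  · rw [ADV_eq_sSup inp f, ← smul_eq_mul, ← Real.sSup_smul_of_nonneg (Nat.cast_nonneg t)]
    refine Real.sSup_le ?_ (ADV_nonneg _ _)
    rintro _ ⟨_, ⟨Γ, hΓ, rfl⟩, rfl⟩
    simpa using card_mul_advRatio_le_ADV (ι := Fin t) hsep hΓ
  · push Not at hsep
    obtain ⟨x, y, hxy, hinp⟩ := hsep
    rw [ADV_eq_zero_of_not_separating hxy hinp, mul_zero]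
    exact ADV_nonneg _ _

theorem adv_direct_sum {V σ : Type*} [Fintype V] [DecidableEq V] {n : ℕ}
    (inp : V → Fin n → Bool) (f : V → σ) (t : ℕ) (ht : 1 ≤ t) :
    (t : ℝ) * ADV inp f ≤
      ADV (fun (x : Fin t → V) (q : Fin t × Fin n) => inp (x q.1) q.2)
        (fun (x : Fin t → V) (j : Fin t) => f (x j)) :=
  adv_direct_sum_general inp f t
end

section
/- With Γ^(t) and D_i^(t) as above, for each coordinate i ∈ {1,…,n} of the first copy, ‖Γ^(t) ∘ D_i^(t)‖ = ‖Γ ∘ D_i‖, where D_i^(t) = D_i ⊗ J^{⊗(t-1)}. -/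
open Matrix Kronecker

def Kt (V : Type*) : ℕ → Type _
  | 0 => PUnit
  | t + 1 => V × Kt V t

instance KtFintype (V : Type*) [Fintype V] : ∀ t, Fintype (Kt V t)
  | 0 => inferInstanceAs (Fintype PUnit)
  | t + 1 => letI := KtFintype V t; inferInstanceAs (Fintype (V × Kt V t))

instance KtDecEq (V : Type*) [DecidableEq V] : ∀ t, DecidableEq (Kt V t)
  | 0 => inferInstanceAs (DecidableEq PUnit)
  | t + 1 => letI := KtDecEq V t; inferInstanceAs (DecidableEq (V × Kt V t))

noncomputable def Gt {V : Type*} [Fintype V] [DecidableEq V] (Γ : Matrix V V ℝ) :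
    ∀ t, Matrix (Kt V t) (Kt V t) ℝ
  | 0 => 0
  | t + 1 => Γ ⊗ₖ (1 : Matrix (Kt V t) (Kt V t) ℝ) + (1 : Matrix V V ℝ) ⊗ₖ Gt Γ t

/-!
Only the summand `Γ ⊗ I` of `Γ^(t)` survives the Hadamard product with `D_i ⊗ J`, because `D_i`
vanishes on the diagonal; this gives `Γ^(t) ∘ D_i^(t) = (Γ ∘ D_i) ⊗ I`. Tensoring with an identity
does not change the operator norm: the operator `M ⊗ I` acts as `M` on each block of coordinates
independently, so it is bounded by `‖M‖`, and on a vector supported on a single block it is exactly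
a copy of `M`.
-/

instance KtNonempty (V : Type*) [Nonempty V] : ∀ t, Nonempty (Kt V t)
  | 0 => inferInstanceAs (Nonempty PUnit)
  | t + 1 => letI := KtNonempty V t; inferInstanceAs (Nonempty (V × Kt V t))

namespace Matrix

theorem kronecker_one_add_one_kronecker_hadamard {α m n : Type*} [CommSemiring α]
    [DecidableEq m] [DecidableEq n] (A D : Matrix m m α) (B : Matrix n n α) (hD : D.diag = 0) :
    (A ⊗ₖ (1 : Matrix n n α) + (1 : Matrix m m α) ⊗ₖ B) ⊙ (D ⊗ₖ of 1) = (A ⊙ D) ⊗ₖ 1 := by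
  rw [add_hadamard, kronecker_hadamard_kronecker, kronecker_hadamard_kronecker,
    one_hadamard_eq_zero_iff.mpr hD, hadamard_of_one, zero_kronecker, add_zero]

end Matrix

theorem diag_diffMatrix {V ι : Type*} (inp : V → ι → Bool) (i : ι) :
    (diffMatrix inp i).diag = 0 := by
  ext x
  simp [diffMatrix]

section KroneckerOne

variable {𝕜 n m : Type*} [RCLike 𝕜] [Fintype n] [Fintype m]

def EuclideanSpace.block (x : EuclideanSpace 𝕜 (n × m)) (a : m) : EuclideanSpace 𝕜 n :=
  WithLp.toLp 2 fun j => x (j, a)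

theorem EuclideanSpace.norm_sq_eq_sum_norm_sq_block (x : EuclideanSpace 𝕜 (n × m)) :
    ‖x‖ ^ 2 = ∑ a, ‖EuclideanSpace.block x a‖ ^ 2 := by
  simp only [EuclideanSpace.norm_sq_eq, Fintype.sum_prod_type_right]
  rfl

variable [DecidableEq n] [DecidableEq m]

theorem EuclideanSpace.block_toEuclideanCLM_kronecker_one (A : Matrix n n 𝕜)
    (x : EuclideanSpace 𝕜 (n × m)) (a : m) :
    EuclideanSpace.block (toEuclideanCLM (𝕜 := 𝕜) (A ⊗ₖ (1 : Matrix m m 𝕜)) x) a =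
      toEuclideanCLM (𝕜 := 𝕜) A (EuclideanSpace.block x a) := by
  ext i
  simp [EuclideanSpace.block, ofLp_toEuclideanCLM, mulVec, dotProduct, Fintype.sum_prod_type,
    one_apply]

theorem norm_toEuclideanCLM_kronecker_one_apply_sq (A : Matrix n n 𝕜)
    (x : EuclideanSpace 𝕜 (n × m)) :
    ‖toEuclideanCLM (𝕜 := 𝕜) (A ⊗ₖ (1 : Matrix m m 𝕜)) x‖ ^ 2 =
      ∑ a, ‖toEuclideanCLM (𝕜 := 𝕜) A (EuclideanSpace.block x a)‖ ^ 2 := by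
  simp only [EuclideanSpace.norm_sq_eq_sum_norm_sq_block,
    EuclideanSpace.block_toEuclideanCLM_kronecker_one]

theorem norm_toEuclideanCLM_kronecker_one_le (A : Matrix n n 𝕜) :
    ‖toEuclideanCLM (𝕜 := 𝕜) (A ⊗ₖ (1 : Matrix m m 𝕜))‖ ≤ ‖toEuclideanCLM (𝕜 := 𝕜) A‖ := by
  refine ContinuousLinearMap.opNorm_le_bound _ (norm_nonneg _) fun x => ?_
  refine le_of_pow_le_pow_left₀ two_ne_zero (by positivity) ?_
  rw [norm_toEuclideanCLM_kronecker_one_apply_sq, mul_pow,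
    EuclideanSpace.norm_sq_eq_sum_norm_sq_block, Finset.mul_sum]
  gcongr with a
  rw [← mul_pow]
  gcongr
  exact (toEuclideanCLM (𝕜 := 𝕜) A).le_opNorm _

theorem norm_toEuclideanCLM_le_kronecker_one [Nonempty m] (A : Matrix n n 𝕜) :
    ‖toEuclideanCLM (𝕜 := 𝕜) A‖ ≤ ‖toEuclideanCLM (𝕜 := 𝕜) (A ⊗ₖ (1 : Matrix m m 𝕜))‖ := by
  set K := toEuclideanCLM (𝕜 := 𝕜) (A ⊗ₖ (1 : Matrix m m 𝕜))
  refine ContinuousLinearMap.opNorm_le_bound _ (norm_nonneg _) fun x => ?_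
  obtain ⟨a₀⟩ := ‹Nonempty m›
  let y : EuclideanSpace 𝕜 (n × m) := WithLp.toLp 2 fun p => if p.2 = a₀ then x p.1 else 0
  have hy : ∀ a, EuclideanSpace.block y a = if a = a₀ then x else 0 := by
    intro a
    ext j
    by_cases ha : a = a₀ <;> simp [y, EuclideanSpace.block, ha]
  have hy_norm : ‖y‖ = ‖x‖ := by
    refine (pow_left_inj₀ (norm_nonneg _) (norm_nonneg _) two_ne_zero).mp ?_
    simp [EuclideanSpace.norm_sq_eq_sum_norm_sq_block, hy, apply_ite]
  have hKy_norm : ‖K y‖ = ‖toEuclideanCLM (𝕜 := 𝕜) A x‖ := by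
    refine (pow_left_inj₀ (norm_nonneg _) (norm_nonneg _) two_ne_zero).mp ?_
    simp [K, norm_toEuclideanCLM_kronecker_one_apply_sq, hy, apply_ite]
  calc ‖toEuclideanCLM (𝕜 := 𝕜) A x‖ = ‖K y‖ := hKy_norm.symm
    _ ≤ ‖K‖ * ‖y‖ := K.le_opNorm y
    _ = ‖K‖ * ‖x‖ := by rw [hy_norm]

theorem norm_toEuclideanCLM_kronecker_one [Nonempty m] (A : Matrix n n 𝕜) :
    ‖toEuclideanCLM (𝕜 := 𝕜) (A ⊗ₖ (1 : Matrix m m 𝕜))‖ = ‖toEuclideanCLM (𝕜 := 𝕜) A‖ :=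
  (norm_toEuclideanCLM_kronecker_one_le A).antisymm (norm_toEuclideanCLM_le_kronecker_one A)

end KroneckerOne

theorem specNorm_Gt_hadamard_diff_general {V ι : Type*} [Fintype V] [DecidableEq V] [Nonempty V]
    (inp : V → ι → Bool) (Γ : Matrix V V ℝ) (i : ι) (s : ℕ) :
    specNorm ((Gt Γ (s + 1)) ⊙
        ((diffMatrix inp i) ⊗ₖ (Matrix.of fun _ _ : Kt V s => (1 : ℝ)))) =
      specNorm (Γ ⊙ diffMatrix inp i) := by
  have hGt : Gt Γ (s + 1) ⊙ (diffMatrix inp i ⊗ₖ of fun _ _ : Kt V s => (1 : ℝ)) =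
      (Γ ⊙ diffMatrix inp i) ⊗ₖ (1 : Matrix (Kt V s) (Kt V s) ℝ) :=
    kronecker_one_add_one_kronecker_hadamard _ _ _ (diag_diffMatrix inp i)
  rw [specNorm, specNorm, hGt]
  exact norm_toEuclideanCLM_kronecker_one _

theorem specNorm_Gt_hadamard_diff {V ι σ : Type*} [Fintype V] [DecidableEq V] [Nonempty V]
    [Fintype ι] (inp : V → ι → Bool) (f : V → σ) (Γ : Matrix V V ℝ)
    (hsymm : Γ.IsSymm) (hvanish : ∀ x y, f x = f y → Γ x y = 0) (i : ι) (s : ℕ) :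
    specNorm ((Gt Γ (s + 1)) ⊙
        ((diffMatrix inp i) ⊗ₖ (Matrix.of fun _ _ : Kt V s => (1 : ℝ)))) =
      specNorm (Γ ⊙ diffMatrix inp i) :=
  specNorm_Gt_hadamard_diff_general inp Γ i s
end

section
/- Let S be the set of inputs x ∈ {0,1}^{d²} (viewed as d blocks of d bits) such that exactly one block consists entirely of 1s and every other block has exactly d−1 ones (i.e., exactly one 0). Define f : S → {1,…,d} mapping x to the index of the all-ones block. Let Γ be the S×S matrix with Γ_{xy} = 1 if x and y differ in exactly two bits and f(x) ≠ f(y), else 0. Then Γ is the adjacency matrix of a d(d−1)-regular graph, so ‖Γ‖ = d(d−1). -/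
open Matrix

/-- An input `x ∈ {0,1}^{d²}`, viewed as `d` blocks of `d` bits, is in `S` if some block is
all-ones and every other block has exactly one `0` (hence exactly `d - 1` ones). -/
def inS (d : ℕ) (x : Fin d → Fin d → Bool) : Prop :=
  ∃ b : Fin d, (∀ i, x b i = true) ∧
    ∀ b', b' ≠ b → (Finset.univ.filter fun i => x b' i = false).card = 1

instance (d : ℕ) : DecidablePred (inS d) := fun x => by unfold inS; infer_instance

namespace TwoLevelAux

lemma allones_eq_witness {d : ℕ} {x : Fin d → Fin d → Bool} {b c : Fin d}
    (hb2 : ∀ b', b' ≠ b → (Finset.univ.filter fun i => x b' i = false).card = 1)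
    (hc : ∀ i, x c i = true) : c = b := by
  by_contra h
  obtain ⟨i, hi⟩ := Finset.card_eq_one.mp (hb2 c h)
  have hmem : i ∈ Finset.univ.filter fun j => x c j = false := by
    rw [hi]; exact Finset.mem_singleton_self i
  have : x c i = false := (Finset.mem_filter.mp hmem).2
  simp [hc i] at this

lemma inS_spec {d : ℕ} {x : Fin d → Fin d → Bool} (hx : inS d x) {c : Fin d}
    (hc : ∀ i, x c i = true) :
    ∀ b', b' ≠ c → (Finset.univ.filter fun i => x b' i = false).card = 1 := by
  obtain ⟨b, hb1, hb2⟩ := hx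
  have hcb : c = b := allones_eq_witness hb2 hc
  subst hcb; exact hb2

lemma inS_allones_unique {d : ℕ} {x : Fin d → Fin d → Bool} (hx : inS d x) {c c' : Fin d}
    (hc : ∀ i, x c i = true) (hc' : ∀ i, x c' i = true) : c = c' := by
  obtain ⟨b, hb1, hb2⟩ := hx
  rw [allones_eq_witness hb2 hc, allones_eq_witness hb2 hc']

abbrev St (d : ℕ) := {x : Fin d → Fin d → Bool // inS d x}

lemma row_count (d : ℕ)
    (f : {x : Fin d → Fin d → Bool // inS d x} → Fin d)
    (hf : ∀ (x : {x : Fin d → Fin d → Bool // inS d x}) (i : Fin d), x.1 (f x) i = true)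
    (x : {x : Fin d → Fin d → Bool // inS d x}) :
    (Finset.univ.filter fun y : {x : Fin d → Fin d → Bool // inS d x} =>
      f x ≠ f y ∧
        (Finset.univ.filter fun p : Fin d × Fin d => x.1 p.1 p.2 ≠ y.1 p.1 p.2).card = 2).card
      = d * (d - 1) := by
  classical
  set b := f x with hb
  have hxb : ∀ i, x.1 b i = true := hf x
  have hxo : ∀ c, c ≠ b → (Finset.univ.filter fun i => x.1 c i = false).card = 1 :=
    inS_spec x.2 hxb
  -- the neighbor construction
  set g : Fin d × Fin d → (Fin d → Fin d → Bool) := fun a c j =>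
    if c = b then decide (j ≠ a.2) else if c = a.1 then true else x.1 c j with hg
  have hgones : ∀ a : Fin d × Fin d, a.1 ≠ b → ∀ j, g a a.1 j = true := by
    intro a ha j; simp [hg, ha]
  have hgS : ∀ a : Fin d × Fin d, a.1 ≠ b → inS d (g a) := by
    rintro ⟨b', i⟩ ha
    refine ⟨b', hgones (b', i) ha, ?_⟩
    intro c hc
    by_cases hcb : c = b
    · have : (Finset.univ.filter fun j => g (b', i) c j = false) = {i} := by
        ext j; simp [hg, hcb]
      rw [this, Finset.card_singleton]
    · have : (Finset.univ.filter fun j => g (b', i) c j = false)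
          = (Finset.univ.filter fun j => x.1 c j = false) := by
        ext j; simp [hg, hcb, hc]
      rw [this]; exact hxo c hcb
  have hfg : ∀ (a : Fin d × Fin d) (ha : a.1 ≠ b), f ⟨g a, hgS a ha⟩ = a.1 :=
    fun a ha =>
      inS_allones_unique (hgS a ha) (hf ⟨g a, hgS a ha⟩) (hgones a ha)
  have hdiffg : ∀ (a : Fin d × Fin d), a.1 ≠ b → ∀ j0,
      (Finset.univ.filter fun j => x.1 a.1 j = false) = {j0} →
      (Finset.univ.filter fun p : Fin d × Fin d => x.1 p.1 p.2 ≠ g a p.1 p.2)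
        = {(b, a.2), (a.1, j0)} := by
    rintro ⟨b', i⟩ ha j0 hj0
    have hbne : b ≠ b' := Ne.symm ha
    ext ⟨c, j⟩
    simp only [Finset.mem_filter, Finset.mem_univ, true_and, Finset.mem_insert,
      Finset.mem_singleton, Prod.mk.injEq]
    by_cases hcb : c = b
    · by_cases hji : j = i <;> simp [hg, hcb, hxb, hji, hbne]
    · by_cases hcb' : c = b'
      · have hx0 : x.1 b' j = false ↔ j = j0 := by
          have := Finset.ext_iff.mp hj0 j
          simpa using this
        simp [hg, hcb', ha, hx0, hbne]
      · simp [hg, hcb, hcb']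
  have hcard2 : ∀ (a : Fin d × Fin d), a.1 ≠ b →
      (Finset.univ.filter fun p : Fin d × Fin d => x.1 p.1 p.2 ≠ g a p.1 p.2).card = 2 := by
    intro a ha
    obtain ⟨j0, hj0⟩ := Finset.card_eq_one.mp (hxo a.1 ha)
    rw [hdiffg a ha j0 hj0]
    exact Finset.card_pair (by simp [Prod.ext_iff, Ne.symm ha])
  have key : ((Finset.univ.erase b) ×ˢ (Finset.univ : Finset (Fin d))).card =
      (Finset.univ.filter fun y : {x : Fin d → Fin d → Bool // inS d x} =>
        f x ≠ f y ∧
          (Finset.univ.filter fun p : Fin d × Fin d => x.1 p.1 p.2 ≠ y.1 p.1 p.2).card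
            = 2).card := by
    have hmem : ∀ a ∈ (Finset.univ.erase b) ×ˢ (Finset.univ : Finset (Fin d)), a.1 ≠ b := by
      intro a ha
      exact Finset.mem_erase.mp (Finset.mem_product.mp ha).1 |>.1
    refine Finset.card_bij (fun a ha => ⟨g a, hgS a (hmem a ha)⟩) ?_ ?_ ?_
    · intro a ha
      simp only [Finset.mem_filter, Finset.mem_univ, true_and]
      constructor
      · rw [hfg a (hmem a ha)]; exact Ne.symm (hmem a ha)
      · exact hcard2 a (hmem a ha)
    · intro a ha a' ha' heq
      have hga : g a = g a' := congrArg Subtype.val heq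
      have hii : a.2 = a'.2 := by
        have := congrFun (congrFun hga b) a'.2
        simp [hg] at this
        exact this.symm
      have hbb : a.1 = a'.1 := by
        by_contra hne
        obtain ⟨j0, hj0⟩ := Finset.card_eq_one.mp (hxo a.1 (hmem a ha))
        have hx0 : x.1 a.1 j0 = false := by
          have : j0 ∈ Finset.univ.filter fun j => x.1 a.1 j = false := by
            rw [hj0]; exact Finset.mem_singleton_self j0
          exact (Finset.mem_filter.mp this).2
        have := congrFun (congrFun hga a.1) j0
        simp [hg, hmem a ha, hne, hx0] at this
      exact Prod.ext hbb hii
    · intro y hy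
      simp only [Finset.mem_filter, Finset.mem_univ, true_and] at hy
      obtain ⟨hy1, hy2⟩ := hy
      set b' := f y with hb'
      have hby : b ≠ b' := hy1
      have hyones : ∀ j, y.1 b' j = true := hf y
      have hyo : ∀ c, c ≠ b' → (Finset.univ.filter fun j => y.1 c j = false).card = 1 :=
        inS_spec y.2 hyones
      obtain ⟨i, hi⟩ := Finset.card_eq_one.mp (hyo b hby)
      obtain ⟨j0, hj0⟩ := Finset.card_eq_one.mp (hxo b' (Ne.symm hby))
      have hyi : y.1 b i = false := by
        have : i ∈ Finset.univ.filter fun j => y.1 b j = false := by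
          rw [hi]; exact Finset.mem_singleton_self i
        exact (Finset.mem_filter.mp this).2
      have hxj0 : x.1 b' j0 = false := by
        have : j0 ∈ Finset.univ.filter fun j => x.1 b' j = false := by
          rw [hj0]; exact Finset.mem_singleton_self j0
        exact (Finset.mem_filter.mp this).2
      -- the difference set is exactly the pair
      have hpairsub : ({(b, i), (b', j0)} : Finset (Fin d × Fin d)) ⊆
          Finset.univ.filter fun p : Fin d × Fin d => x.1 p.1 p.2 ≠ y.1 p.1 p.2 := by
        intro p hp
        simp only [Finset.mem_insert, Finset.mem_singleton] at hp
        rcases hp with rfl | rfl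
        · simp [hxb i, hyi]
        · simp [hxj0, hyones j0]
      have hpair : ({(b, i), (b', j0)} : Finset (Fin d × Fin d)) =
          Finset.univ.filter fun p : Fin d × Fin d => x.1 p.1 p.2 ≠ y.1 p.1 p.2 := by
        refine Finset.eq_of_subset_of_card_le hpairsub ?_
        rw [hy2, Finset.card_pair (by simp [Prod.ext_iff, hby])]
      have heqfun : y.1 = g (b', i) := by
        funext c j
        have hnd : ∀ c j, ((c, j) : Fin d × Fin d) ∉ ({(b, i), (b', j0)} : Finset (Fin d × Fin d))
            → x.1 c j = y.1 c j := by
          intro c j hcj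
          rw [hpair] at hcj
          simp only [Finset.mem_filter, Finset.mem_univ, true_and] at hcj
          exact not_not.mp hcj
        by_cases hcb : c = b
        · by_cases hji : j = i
          · simp [hg, hcb, hji, hyi]
          · have hxy : x.1 c j = y.1 c j := by
              apply hnd
              simp [Prod.ext_iff, hcb, hji, hby]
            rw [← hxy]
            simp [hg, hcb, hji, hxb]
        · by_cases hcb' : c = b'
          · simp [hg, hcb, hcb', hyones, Ne.symm hby]
          · have hxy : x.1 c j = y.1 c j := by
              apply hnd
              simp [Prod.ext_iff, hcb, hcb']
            rw [← hxy]
            simp [hg, hcb, hcb']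
      refine ⟨(b', i), ?_, ?_⟩
      · simp [Finset.mem_product, Finset.mem_erase, Ne.symm hby]
      · exact Subtype.ext heqfun.symm
  rw [← key, Finset.card_product, Finset.card_erase_of_mem (Finset.mem_univ b)]
  simp [Nat.mul_comm]

end TwoLevelAux

set_option maxHeartbeats 1000000 in
theorem twoLevel_adversary_matrix_regular (d : ℕ) (hd : 2 ≤ d)
    (f : {x : Fin d → Fin d → Bool // inS d x} → Fin d)
    (hf : ∀ (x : {x : Fin d → Fin d → Bool // inS d x}) (i : Fin d), x.1 (f x) i = true)
    (Γ : Matrix {x : Fin d → Fin d → Bool // inS d x} {x : Fin d → Fin d → Bool // inS d x} ℝ)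
    (hΓ : ∀ x y, Γ x y =
      if f x ≠ f y ∧
          (Finset.univ.filter fun p : Fin d × Fin d => x.1 p.1 p.2 ≠ y.1 p.1 p.2).card = 2
        then 1 else 0) :
    (∀ x, (Finset.univ.filter fun y => Γ x y = 1).card = d * (d - 1)) ∧
    specNorm Γ = (d * (d - 1) : ℕ) := by
  classical
  have hΓ1 : ∀ x y : TwoLevelAux.St d, Γ x y = 1 ↔
      (f x ≠ f y ∧
        (Finset.univ.filter fun p : Fin d × Fin d => x.1 p.1 p.2 ≠ y.1 p.1 p.2).card = 2) := by
    intro x y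
    rw [hΓ]
    split
    · next h => simp [h]
    · next h => simp [h]
  have hrowcard : ∀ x : TwoLevelAux.St d, (Finset.univ.filter fun y => Γ x y = 1).card = d * (d - 1) := by
    intro x
    rw [Finset.filter_congr (fun y _ => hΓ1 x y)]
    exact TwoLevelAux.row_count d f hf x
  refine ⟨hrowcard, ?_⟩
  -- row sums
  have hrow : ∀ x : TwoLevelAux.St d, ∑ y, Γ x y = (d * (d - 1) : ℕ) := by
    intro x
    have : ∑ y, Γ x y = ((Finset.univ.filter fun y : TwoLevelAux.St d => Γ x y = 1).card : ℝ) := by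
      rw [← Finset.sum_boole]
      refine Finset.sum_congr rfl fun y _ => ?_
      by_cases h : Γ x y = 1
      · simp [h]
      · have h0 : Γ x y = 0 := by
          rw [hΓ]
          split
          · next hc => exact absurd ((hΓ1 x y).mpr hc) h
          · rfl
        simp [h, h0]
    rw [this, hrowcard x]
  have hsymm : ∀ x y : TwoLevelAux.St d, Γ x y = Γ y x := by
    intro x y
    rw [hΓ, hΓ]
    congr 1
    have : (Finset.univ.filter fun p : Fin d × Fin d => x.1 p.1 p.2 ≠ y.1 p.1 p.2)
        = (Finset.univ.filter fun p : Fin d × Fin d => y.1 p.1 p.2 ≠ x.1 p.1 p.2) := by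
      apply Finset.filter_congr
      intro p _
      exact ne_comm
    rw [this]
    exact propext (and_congr_left' ne_comm)
  have hcol : ∀ y : TwoLevelAux.St d, ∑ x, Γ x y = (d * (d - 1) : ℕ) := by
    intro y
    calc ∑ x, Γ x y = ∑ x, Γ y x := Finset.sum_congr rfl fun x _ => hsymm x y
    _ = _ := hrow y
  have hnonneg : ∀ x y : TwoLevelAux.St d, 0 ≤ Γ x y := by
    intro x y; rw [hΓ]; split <;> norm_num
  have hidem : ∀ x y : TwoLevelAux.St d, Γ x y ^ 2 = Γ x y := by
    intro x y; rw [hΓ]; split <;> norm_num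
  set k : ℝ := ((d * (d - 1) : ℕ) : ℝ) with hk
  have hk0 : 0 ≤ k := Nat.cast_nonneg _
  set T := Matrix.toEuclideanCLM (𝕜 := ℝ) Γ with hT
  have happly : ∀ (v : EuclideanSpace ℝ (TwoLevelAux.St d)) (x : TwoLevelAux.St d), T v x = ∑ y, Γ x y * v y := by
    intro v x
    rfl
  -- TwoLevelAux.St d is nonempty
  have hS : Nonempty (TwoLevelAux.St d) := by
    refine ⟨⟨fun c j => if c = ⟨0, by omega⟩ then true else decide (j ≠ ⟨0, by omega⟩), ?_⟩⟩
    refine ⟨⟨0, by omega⟩, fun i => by simp, ?_⟩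
    intro c hc
    have : (Finset.univ.filter fun j : Fin d =>
        (if c = ⟨0, by omega⟩ then true else decide (j ≠ ⟨0, by omega⟩)) = false)
        = {⟨0, by omega⟩} := by
      ext j; simp [hc]
    rw [this, Finset.card_singleton]
  -- upper bound
  have hub : ‖T‖ ≤ k := by
    apply ContinuousLinearMap.opNorm_le_bound _ hk0
    intro v
    have hv2 : ‖T v‖ ^ 2 ≤ (k * ‖v‖) ^ 2 := by
      have hTv : ‖T v‖ ^ 2 = ∑ x, (∑ y, Γ x y * v y) ^ 2 := by
        rw [EuclideanSpace.norm_eq]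
        rw [Real.sq_sqrt (by positivity)]
        refine Finset.sum_congr rfl fun x _ => ?_
        rw [happly v x, Real.norm_eq_abs, sq_abs]
      have hvn : ‖v‖ ^ 2 = ∑ y, v y ^ 2 := by
        rw [EuclideanSpace.norm_eq, Real.sq_sqrt (by positivity)]
        refine Finset.sum_congr rfl fun y _ => ?_
        rw [Real.norm_eq_abs, sq_abs]
      rw [hTv, mul_pow, hvn, Finset.mul_sum]
      have step1 : ∀ x : TwoLevelAux.St d, (∑ y, Γ x y * v y) ^ 2 ≤ k * ∑ y, Γ x y * v y ^ 2 := by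
        intro x
        have hcs := Finset.sum_mul_sq_le_sq_mul_sq Finset.univ
          (fun y : TwoLevelAux.St d => Γ x y) (fun y => Γ x y * v y)
        have hfg : ∀ y : TwoLevelAux.St d, Γ x y * (Γ x y * v y) = Γ x y * v y := by
          intro y
          by_cases h : Γ x y = 1
          · rw [h, one_mul, one_mul]
          · have h0 : Γ x y = 0 := by
              rw [hΓ]
              split
              · next hc => exact absurd ((hΓ1 x y).mpr hc) h
              · rfl
            rw [h0]; ring
        calc (∑ y, Γ x y * v y) ^ 2
            = (∑ y, Γ x y * (Γ x y * v y)) ^ 2 := by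
              congr 1; exact (Finset.sum_congr rfl fun y _ => hfg y).symm
          _ ≤ (∑ y, Γ x y ^ 2) * ∑ y, (Γ x y * v y) ^ 2 := hcs
          _ = k * ∑ y, Γ x y * v y ^ 2 := by
              congr 1
              · rw [Finset.sum_congr rfl fun y _ => hidem x y, hrow x]
              · refine Finset.sum_congr rfl fun y _ => ?_
                rw [mul_pow, hidem]
      calc ∑ x, (∑ y, Γ x y * v y) ^ 2
          ≤ ∑ x, k * ∑ y, Γ x y * v y ^ 2 :=
            Finset.sum_le_sum fun x _ => step1 x
        _ = k * ∑ y, (∑ x : TwoLevelAux.St d, Γ x y) * v y ^ 2 := by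
            rw [← Finset.mul_sum, Finset.sum_comm]
            congr 1
            refine Finset.sum_congr rfl fun y _ => ?_
            rw [Finset.sum_mul]
        _ = ∑ y, k * k * v y ^ 2 := by
            rw [Finset.mul_sum]
            refine Finset.sum_congr rfl fun y _ => ?_
            rw [hcol y]; ring
        _ = ∑ y, k ^ 2 * v y ^ 2 := Finset.sum_congr rfl fun y _ => by ring
    have h1 : (0:ℝ) ≤ ‖T v‖ := norm_nonneg _
    have h2 : (0:ℝ) ≤ k * ‖v‖ := mul_nonneg hk0 (norm_nonneg _)
    nlinarith [hv2]
  -- lower bound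
  have hlb : k ≤ ‖T‖ := by
    set v1 : EuclideanSpace ℝ (TwoLevelAux.St d) := (WithLp.equiv 2 (TwoLevelAux.St d → ℝ)).symm (fun _ => 1) with hv1
    have hv1app : ∀ x : TwoLevelAux.St d, v1 x = 1 := fun x => rfl
    have hTv1 : T v1 = k • v1 := by
      apply (WithLp.equiv 2 (TwoLevelAux.St d → ℝ)).injective
      funext x
      show T v1 x = (k • v1) x
      have h1 : T v1 x = k := by
        rw [happly v1 x]
        simp only [hv1app, mul_one]
        exact hrow x
      have h2 : (k • v1) x = k := by
        simp [PiLp.smul_apply, hv1app x]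
      rw [h1, h2]
    have hnv1 : 0 < ‖v1‖ := by
      have : v1 ≠ 0 := by
        intro h
        have h0 := congrFun (congrArg (WithLp.equiv 2 (TwoLevelAux.St d → ℝ)) h) (Classical.arbitrary (TwoLevelAux.St d))
        simp [hv1] at h0
      exact norm_pos_iff.mpr this
    have := T.le_opNorm v1
    rw [hTv1, norm_smul, Real.norm_eq_abs, abs_of_nonneg hk0] at this
    exact le_of_mul_le_mul_right this hnv1
  show ‖T‖ = k
  exact le_antisymm hub hlb
end

section
/- In the setting of the two-level certification adversary construction, for every bit position i ∈ {1,…,d²} and every x ∈ S, the number of y ∈ S with Γ_{xy} = 1 and x_i ≠ y_i is at most d. Consequently ‖Γ ∘ D_i‖ ≤ d for every i. -/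
open Matrix

/-!
If `Γ x y = 1`, then `y` arises from `x` by moving the all-ones block from `f x` to `f y`: `y` is
all ones except at one position `(f x, k)` of block `f x`, and `x` and `y` differ exactly at
`(f x, k)` and at the zero of `x` in block `f y`. Hence a neighbour `y` differing from `x` at
`i = (b, j)` is determined by `f y` when `b = f x` (then `k = j`), and by `k` otherwise (then
`f y = b`): there are at most `d` of them. The norm bound is the Schur test: for a nonnegative
symmetric matrix with row sums at most `r`, Cauchy–Schwarz weighted by the entries of a row gives
`‖M v‖² ≤ r² ‖v‖²`.
-/

open Finset

theorem specNorm_le_of_isSymm_of_sum_le {n : Type*} [Fintype n] [DecidableEq n]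
    {M : Matrix n n ℝ} {r : ℝ} (hr : 0 ≤ r) (hM : ∀ x y, 0 ≤ M x y) (hsymm : M.IsSymm)
    (hrow : ∀ x, ∑ y, M x y ≤ r) : specNorm M ≤ r := by
  refine ContinuousLinearMap.opNorm_le_bound _ hr fun v => ?_
  have hcol : ∀ y, ∑ x, M x y ≤ r := fun y => by simpa only [hsymm.apply] using hrow y
  have hCS : ∀ x, (∑ y, M x y * v y) ^ 2 ≤ (∑ y, M x y) * ∑ y, M x y * v y ^ 2 := fun x =>
    sum_sq_le_sum_mul_sum_of_sq_le_mul _ (fun y _ => hM x y)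
      (fun y _ => mul_nonneg (hM x y) (sq_nonneg _)) fun y _ => le_of_eq (by ring)
  have hsq : ‖toEuclideanCLM (𝕜 := ℝ) M v‖ ^ 2 ≤ (r * ‖v‖) ^ 2 := calc
    ‖toEuclideanCLM (𝕜 := ℝ) M v‖ ^ 2 = ∑ x, (∑ y, M x y * v y) ^ 2 := by
      simp [EuclideanSpace.real_norm_sq_eq, mulVec, dotProduct]
    _ ≤ ∑ x, r * ∑ y, M x y * v y ^ 2 := by
      gcongr with x
      exact (hCS x).trans <| mul_le_mul_of_nonneg_right (hrow x) <|
        sum_nonneg fun y _ => mul_nonneg (hM x y) (sq_nonneg _)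
    _ = r * ∑ y, (∑ x, M x y) * v y ^ 2 := by
      rw [← mul_sum, sum_comm]
      simp_rw [sum_mul]
    _ ≤ r * ∑ y, r * v y ^ 2 := by gcongr with y; exact hcol y
    _ = (r * ‖v‖) ^ 2 := by rw [← mul_sum, mul_pow, EuclideanSpace.real_norm_sq_eq]; ring
  exact (sq_le_sq₀ (norm_nonneg _) (by positivity)).1 hsq

theorem specNorm_adjacency_le {n : Type*} [Fintype n] [DecidableEq n] {N : n → Finset n}
    (hN : ∀ x y, y ∈ N x → x ∈ N y) {r : ℕ} (hcard : ∀ x, #(N x) ≤ r) :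
    specNorm (of fun x y => if y ∈ N x then (1 : ℝ) else 0) ≤ r :=
  specNorm_le_of_isSymm_of_sum_le r.cast_nonneg
    (fun x y => by simp only [of_apply]; split_ifs <;> norm_num)
    (IsSymm.ext fun x y => if_congr ⟨hN y x, hN x y⟩ rfl rfl)
    fun x => by
      simpa only [of_apply, sum_boole, filter_mem_eq_inter, univ_inter, Nat.cast_le] using hcard x

namespace TwoLevelNAND

variable {d : ℕ}

abbrev S (d : ℕ) := {x : Fin d → Fin d → Bool // inS d x}

def diffSet (x y : Fin d → Fin d → Bool) : Finset (Fin d × Fin d) :=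
  univ.filter fun p => x p.1 p.2 ≠ y p.1 p.2

lemma diffSet_comm (x y : Fin d → Fin d → Bool) : diffSet x y = diffSet y x :=
  filter_congr fun _ _ => ne_comm

def moveOnesBlock (x : Fin d → Fin d → Bool) (a k c : Fin d) : Fin d → Fin d → Bool :=
  fun b i => if b = a then decide (i ≠ k) else if b = c then true else x b i

variable {f : S d → Fin d}

lemma exists_block_eq_decide_ne (hf : ∀ (x : S d) i, x.1 (f x) i = true) (x : S d) {b : Fin d}
    (hb : b ≠ f x) : ∃ k, ∀ i, x.1 b i = decide (i ≠ k) := by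
  obtain ⟨b₀, hb₀, hcard⟩ := x.2
  have hfx : f x = b₀ := by
    by_contra hne
    obtain ⟨i, hi⟩ := card_pos.1 ((hcard _ hne).symm ▸ Nat.one_pos)
    simp [hf x i] at hi
  obtain ⟨k, hk⟩ := card_eq_one.1 (hcard b (hfx ▸ hb))
  refine ⟨k, fun i => ?_⟩
  have hi : x.1 b i = false ↔ i = k := by simpa using Finset.ext_iff.1 hk i
  cases h : x.1 b i <;> simp_all

lemma eq_moveOnesBlock_of_adj (hf : ∀ (x : S d) i, x.1 (f x) i = true) {x y : S d}
    (hne : f x ≠ f y) (hcard : #(diffSet x.1 y.1) = 2) :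
    ∃ k, y.1 = moveOnesBlock x.1 (f x) k (f y) ∧
      ∀ p ∈ diffSet x.1 y.1, p = (f x, k) ∨ p.1 = f y := by
  obtain ⟨k, hk⟩ := exists_block_eq_decide_ne hf y hne
  obtain ⟨j, hj⟩ := exists_block_eq_decide_ne hf x hne.symm
  have hdiff : diffSet x.1 y.1 = {(f x, k), (f y, j)} := by
    refine (eq_of_subset_of_card_le (fun p hp => ?_) ?_).symm
    · simp only [mem_insert, mem_singleton] at hp
      rcases hp with rfl | rfl <;> simp [diffSet, hf, hk, hj]
    · rw [hcard, card_pair (by simp [hne])]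
  refine ⟨k, funext fun b => funext fun i => ?_, fun p hp => ?_⟩
  · unfold moveOnesBlock
    split_ifs with hbx hby
    · subst hbx; exact hk i
    · subst hby; exact hf y i
    · have : (b, i) ∉ diffSet x.1 y.1 := by simp [hdiff, hbx, hby]
      simpa [diffSet, eq_comm] using this
  · rw [hdiff] at hp
    simp only [mem_insert, mem_singleton] at hp
    rcases hp with rfl | rfl <;> simp

lemma card_neighbors_ne_at_le (hf : ∀ (x : S d) i, x.1 (f x) i = true) (i : Fin d × Fin d)
    (x : S d) :
    #{y | (f x ≠ f y ∧ #(diffSet x.1 y.1) = 2) ∧ x.1 i.1 i.2 ≠ y.1 i.1 i.2} ≤ d := by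
  let g : Fin d → Fin d → Fin d → Bool := fun t =>
    if i.1 = f x then moveOnesBlock x.1 (f x) i.2 t else moveOnesBlock x.1 (f x) t i.1
  have hsub : (univ.filter fun y : S d => (f x ≠ f y ∧ #(diffSet x.1 y.1) = 2) ∧
      x.1 i.1 i.2 ≠ y.1 i.1 i.2).image Subtype.val ⊆ univ.image g := by
    simp only [subset_iff, mem_image, mem_filter, mem_univ, true_and]
    rintro _ ⟨y, ⟨⟨hne, hcard⟩, hi⟩, rfl⟩
    obtain ⟨k, hy, hdiff⟩ := eq_moveOnesBlock_of_adj hf hne hcard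
    rcases hdiff i (by simpa [diffSet] using hi) with rfl | hiy
    · exact ⟨f y, by simp [g, hy]⟩
    · exact ⟨k, by simp [g, hy, hiy, Ne.symm hne]⟩
  calc _ = #((univ.filter _).image Subtype.val) :=
        (card_image_of_injective _ Subtype.val_injective).symm
    _ ≤ #(univ.image g) := card_le_card hsub
    _ ≤ d := card_image_le.trans (by simp)

end TwoLevelNAND

open TwoLevelNAND

theorem twoLevel_adversary_hadamard_bound_general (d : ℕ)
    (f : {x : Fin d → Fin d → Bool // inS d x} → Fin d)
    (hf : ∀ (x : {x : Fin d → Fin d → Bool // inS d x}) (i : Fin d), x.1 (f x) i = true)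
    (Γ : Matrix {x : Fin d → Fin d → Bool // inS d x} {x : Fin d → Fin d → Bool // inS d x} ℝ)
    (hΓ : ∀ x y, Γ x y =
      if f x ≠ f y ∧
          (Finset.univ.filter fun p : Fin d × Fin d => x.1 p.1 p.2 ≠ y.1 p.1 p.2).card = 2
        then 1 else 0) :
    (∀ (i : Fin d × Fin d) (x : {x : Fin d → Fin d → Bool // inS d x}),
      (Finset.univ.filter fun y => Γ x y = 1 ∧ x.1 i.1 i.2 ≠ y.1 i.1 i.2).card ≤ d) ∧
    (∀ i : Fin d × Fin d,
      specNorm (Γ ⊙ Matrix.of fun x y => if x.1 i.1 i.2 ≠ y.1 i.1 i.2 then (1 : ℝ) else 0)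
        ≤ d) := by
  have hΓ_eq_one : ∀ x y, Γ x y = 1 ↔ f x ≠ f y ∧ #(diffSet x.1 y.1) = 2 := fun x y => by
    rw [hΓ]; split_ifs <;> simp_all [diffSet]
  have hcount : ∀ (i : Fin d × Fin d) x,
      #{y | Γ x y = 1 ∧ x.1 i.1 i.2 ≠ y.1 i.1 i.2} ≤ d := fun i x => by
    simpa only [hΓ_eq_one] using card_neighbors_ne_at_le hf i x
  refine ⟨hcount, fun i => ?_⟩
  set N := fun x => univ.filter fun y => Γ x y = 1 ∧ x.1 i.1 i.2 ≠ y.1 i.1 i.2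
  have hM : (Γ ⊙ of fun x y => if x.1 i.1 i.2 ≠ y.1 i.1 i.2 then (1 : ℝ) else 0) =
      of fun x y => if y ∈ N x then 1 else 0 := by
    ext x y
    simp only [N, hadamard_apply, of_apply, mem_filter, mem_univ, true_and, hΓ_eq_one]
    rw [hΓ, ite_zero_mul_ite_zero, mul_one]
    rfl
  rw [hM]
  refine specNorm_adjacency_le (fun x y hxy => ?_) (hcount i)
  simp only [N, mem_filter, mem_univ, true_and, hΓ_eq_one, diffSet_comm] at hxy ⊢
  exact ⟨⟨hxy.1.1.symm, hxy.1.2⟩, hxy.2.symm⟩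

theorem twoLevel_adversary_hadamard_bound (d : ℕ) (hd : 2 ≤ d)
    (f : {x : Fin d → Fin d → Bool // inS d x} → Fin d)
    (hf : ∀ (x : {x : Fin d → Fin d → Bool // inS d x}) (i : Fin d), x.1 (f x) i = true)
    (Γ : Matrix {x : Fin d → Fin d → Bool // inS d x} {x : Fin d → Fin d → Bool // inS d x} ℝ)
    (hΓ : ∀ x y, Γ x y =
      if f x ≠ f y ∧
          (Finset.univ.filter fun p : Fin d × Fin d => x.1 p.1 p.2 ≠ y.1 p.1 p.2).card = 2
        then 1 else 0) :
    (∀ (i : Fin d × Fin d) (x : {x : Fin d → Fin d → Bool // inS d x}),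
      (Finset.univ.filter fun y => Γ x y = 1 ∧ x.1 i.1 i.2 ≠ y.1 i.1 i.2).card ≤ d) ∧
    (∀ i : Fin d × Fin d,
      specNorm (Γ ⊙ Matrix.of fun x y => if x.1 i.1 i.2 ≠ y.1 i.1 i.2 then (1 : ℝ) else 0)
        ≤ d) :=
  twoLevel_adversary_hadamard_bound_general d f hf Γ hΓ
end

section
/- Suppose E_0, E_1 : ℕ → ℝ satisfy E_0(1) = d, E_1(1) = a·√d, E_1(k) = b·(1 + k·(log d)/√d)·d^{k/2} + E_0(k−1), and E_0(k) = d·E_1(k−1) for k ≥ 2, where a, b, d > 0 are constants with d ≥ 2. Then there is a constant c (depending only on a, b) such that E_1(k) ≤ c·k·(1 + k·(log d)/√d)·d^{k/2} and E_0(k) ≤ c·k·(1 + k·(log d)/√d)·d^{(k+1)/2} for all k ≥ 1. -/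
theorem recurrence_bound (a b : ℝ) (ha : 0 < a) (hb : 0 < b) :
    ∃ c : ℝ, 0 < c ∧ ∀ d : ℝ, 2 ≤ d → ∀ E0 E1 : ℕ → ℝ,
      E0 1 = d →
      E1 1 = a * Real.sqrt d →
      (∀ k : ℕ, 2 ≤ k →
        E1 k = b * (1 + k * Real.log d / Real.sqrt d) * d ^ ((k : ℝ) / 2) + E0 (k - 1)) →
      (∀ k : ℕ, 2 ≤ k → E0 k = d * E1 (k - 1)) →
      ∀ k : ℕ, 1 ≤ k →
        E1 k ≤ c * k * (1 + k * Real.log d / Real.sqrt d) * d ^ ((k : ℝ) / 2) ∧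
        E0 k ≤ c * k * (1 + k * Real.log d / Real.sqrt d) * d ^ (((k : ℝ) + 1) / 2) := by
  refine ⟨a + b + 1, by linarith, ?_⟩
  intro d hd E0 E1 h01 h11 hrec1 hrec0
  set c : ℝ := a + b + 1 with hc
  have hd0 : (0 : ℝ) < d := by linarith
  have hsd : 0 < Real.sqrt d := Real.sqrt_pos.mpr hd0
  have hld : 0 ≤ Real.log d := Real.log_nonneg (by linarith)
  simp only [mul_div_assoc] at hrec1 ⊢
  set L : ℝ := Real.log d / Real.sqrt d with hLdef
  have hL : 0 ≤ L := by positivity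
  have hc0 : (0 : ℝ) < c := by simp [hc]; linarith
  have hca : a ≤ c := by simp [hc]; linarith
  have hcb : b + 1 ≤ c := by simp [hc]; linarith
  intro k hk
  induction k, hk using Nat.le_induction with
  | base =>
      constructor
      · rw [h11]
        have hsq : d ^ (((1 : ℕ) : ℝ) / 2) = Real.sqrt d := by
          rw [Real.sqrt_eq_rpow]; norm_num
        rw [hsq]
        push_cast
        nlinarith [mul_nonneg (mul_nonneg hc0.le hL) hsd.le,
          mul_nonneg (by linarith : (0:ℝ) ≤ c - a) hsd.le]
      · rw [h01]
        have h1 : ((((1 : ℕ) : ℝ)) + 1) / 2 = (1 : ℝ) := by norm_num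
        rw [h1, Real.rpow_one]
        push_cast
        nlinarith [mul_nonneg (mul_nonneg hc0.le hL) hd0.le]
  | succ k hk1 ih =>
      obtain ⟨ih1, ih0⟩ := ih
      have hk2 : 2 ≤ k + 1 := by omega
      have hsub : (k + 1) - 1 = k := by omega
      have he1 := hrec1 (k + 1) hk2
      have he0 := hrec0 (k + 1) hk2
      rw [hsub] at he1 he0
      have hk0 : (0:ℝ) ≤ (k:ℝ) := by positivity
      constructor
      · rw [he1]
        have hDpos : 0 < d ^ ((((k : ℕ) : ℝ) + 1) / 2) := Real.rpow_pos_of_pos hd0 _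
        have key : b * (1 + ((k:ℝ)+1) * L) + c * k * (1 + (k:ℝ) * L) ≤
            c * ((k:ℝ)+1) * (1 + ((k:ℝ)+1) * L) := by
          nlinarith [mul_nonneg (by linarith : (0:ℝ) ≤ c - b) hL,
            mul_nonneg (mul_nonneg (by linarith : (0:ℝ) ≤ c - b) hk0) hL,
            mul_nonneg (mul_nonneg hc0.le hk0) hL]
        push_cast
        linarith [mul_le_mul_of_nonneg_right key (le_of_lt hDpos), ih0]
      · rw [he0]
        have hexp2 : d * d ^ ((k : ℝ) / 2) = d ^ ((((k:ℝ) + 1) + 1) / 2) := by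
          rw [show (((k:ℝ) + 1) + 1) / 2 = (k:ℝ)/2 + 1 by ring, Real.rpow_add hd0,
            Real.rpow_one]
          ring
        have hDpos : 0 < d ^ ((((k:ℝ) + 1) + 1) / 2) := Real.rpow_pos_of_pos hd0 _
        have h1 : d * E1 k ≤ d * (c * k * (1 + (k:ℝ) * L) * d ^ ((k : ℝ) / 2)) :=
          mul_le_mul_of_nonneg_left ih1 (le_of_lt hd0)
        have h2 : d * (c * k * (1 + (k:ℝ) * L) * d ^ ((k : ℝ) / 2))
            = c * k * (1 + (k:ℝ) * L) * d ^ ((((k:ℝ) + 1) + 1) / 2) := by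
          rw [← hexp2]; ring
        have key : c * (k:ℝ) * (1 + (k:ℝ) * L) ≤ c * ((k:ℝ)+1) * (1 + ((k:ℝ)+1) * L) := by
          nlinarith [mul_nonneg hc0.le hL, mul_nonneg (mul_nonneg hc0.le hk0) hL]
        push_cast
        calc d * E1 k ≤ c * k * (1 + (k:ℝ) * L) * d ^ ((((k:ℝ) + 1) + 1) / 2) := by
              rw [← h2]; exact h1
          _ ≤ c * ((k:ℝ)+1) * (1 + ((k:ℝ)+1) * L) * d ^ ((((k:ℝ) + 1) + 1) / 2) :=
              mul_le_mul_of_nonneg_right key (le_of_lt hDpos)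
end
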